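/- For a trace-free symmetric endomorphism W of a 3-dimensional real inner product space, the lowest eigenvalue w of W satisfies w ≥ -√(2/3)·‖W‖, where ‖W‖ is the Frobenius (Hilbert–Schmidt) norm of W. -/

import Mathlib

/-!
Diagonalise `W` in an orthonormal eigenbasis: its eigenvalues `μ₁, …, μₙ` sum to `tr W = 0` and
their squares sum to `tr (W ∘ W)`. For an eigenvalue `μᵢ`, Cauchy–Schwarz applied to
`μᵢ = -∑_{j ≠ i} μⱼ` gives `μᵢ² ≤ (n - 1) ∑_{j ≠ i} μⱼ²`, i.e. `n μᵢ² ≤ (n - 1) tr (W ∘ W)`.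
For `n = 3` this is `|μᵢ| ≤ √(2/3) · √(tr (W ∘ W))`.
-/

open Finset

theorem Finset.card_mul_sq_le_of_sum_eq_zero {ι α : Type*} [CommRing α] [LinearOrder α]
    [IsStrictOrderedRing α] {s : Finset ι} {f : ι → α} (hf : ∑ j ∈ s, f j = 0) {i : ι}
    (hi : i ∈ s) : #s * f i ^ 2 ≤ (#s - 1) * ∑ j ∈ s, f j ^ 2 := by
  classical
  have hfi : f i = -∑ j ∈ s.erase i, f j := by
    rw [← add_sum_erase s f hi] at hf; linear_combination hf
  have hcard : (#(s.erase i) : α) = #s - 1 := by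
    rw [card_erase_of_mem hi, Nat.cast_pred (card_pos.mpr ⟨i, hi⟩)]
  have hcs : f i ^ 2 ≤ (#s - 1) * ∑ j ∈ s.erase i, f j ^ 2 := by
    rw [hfi, neg_sq, ← hcard]; exact sq_sum_le_card_mul_sum_sq
  rw [← add_sum_erase s (f · ^ 2) hi]
  linear_combination hcs

namespace LinearMap.IsSymmetric

section RCLike

variable {𝕜 E : Type*} [RCLike 𝕜] [NormedAddCommGroup E] [InnerProductSpace 𝕜 E]
  [FiniteDimensional 𝕜 E] {n : ℕ} {T : E →ₗ[𝕜] E}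

theorem trace_comp_self_eq_sum_sq_eigenvalues (hT : T.IsSymmetric) (hn : Module.finrank 𝕜 E = n) :
    (T ∘ₗ T).trace 𝕜 E = ∑ i, ((hT.eigenvalues hn i ^ 2 : ℝ) : 𝕜) := by
  rw [trace_eq_sum_inner _ (hT.eigenvectorBasis hn)]
  refine Fintype.sum_congr _ _ fun i => ?_
  simp [inner_smul_right, (hT.eigenvectorBasis hn).orthonormal.1 i, sq]

end RCLike

section Real

variable {E : Type*} [NormedAddCommGroup E] [InnerProductSpace ℝ E]
  [FiniteDimensional ℝ E] {n : ℕ} {T : E →ₗ[ℝ] E}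

theorem card_mul_sq_le_of_trace_eq_zero (hT : T.IsSymmetric) (hn : Module.finrank ℝ E = n)
    (htr : T.trace ℝ E = 0) {μ : ℝ} (hμ : Module.End.HasEigenvalue T μ) :
    n * μ ^ 2 ≤ (n - 1) * (T ∘ₗ T).trace ℝ E := by
  obtain ⟨i, rfl⟩ := hT.exists_eigenvalues_eq hn hμ
  rw [hT.trace_eq_sum_eigenvalues hn] at htr
  have := Finset.card_mul_sq_le_of_sum_eq_zero htr (mem_univ i)
  simpa [hT.trace_comp_self_eq_sum_sq_eigenvalues hn] using this

end Real

end LinearMap.IsSymmetric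

theorem stmt_0_general {V : Type*} [NormedAddCommGroup V] [InnerProductSpace ℝ V]
    [FiniteDimensional ℝ V] (hdim : Module.finrank ℝ V = 3)
    (W : V →ₗ[ℝ] V) (hsym : W.IsSymmetric)
    (htr : LinearMap.trace ℝ V W = 0)
    (w : ℝ) (hw : Module.End.HasEigenvalue W w) :
    w ≥ -Real.sqrt (2 / 3) * Real.sqrt (LinearMap.trace ℝ V (W ∘ₗ W)) := by
  have hsq : w ^ 2 ≤ 2 / 3 * LinearMap.trace ℝ V (W ∘ₗ W) := by
    have := hsym.card_mul_sq_le_of_trace_eq_zero hdim htr hw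
    norm_num at this
    linarith
  rw [neg_mul, ← Real.sqrt_mul (by norm_num), ge_iff_le, neg_le]
  exact (neg_le_abs w).trans (Real.abs_le_sqrt hsq)

/-- For a trace-free symmetric endomorphism `W` of a 3-dimensional real inner
product space, every eigenvalue (in particular the lowest one) satisfies
`w ≥ -√(2/3)·‖W‖`, where `‖W‖² = tr(W ∘ W)` is the Frobenius norm squared. -/
theorem stmt_0 {V : Type*} [NormedAddCommGroup V] [InnerProductSpace ℝ V]
    [FiniteDimensional ℝ V] (hdim : Module.finrank ℝ V = 3)
    (W : V →ₗ[ℝ] V) (hsym : W.IsSymmetric)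
    (htr : LinearMap.trace ℝ V W = 0)
    (w : ℝ) (hw : Module.End.HasEigenvalue W w)
    (hlow : ∀ μ : ℝ, Module.End.HasEigenvalue W μ → w ≤ μ) :
    w ≥ -Real.sqrt (2 / 3) * Real.sqrt (LinearMap.trace ℝ V (W ∘ₗ W)) :=
  stmt_0_general hdim W hsym htr w hw
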